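/- Let n ∈ (ℕ_{>0})^d, let g be a modulation on J_n, and let (X_s)_{s∈J_n} be jointly Gaussian, centered, square-integrable real random variables. For ω ∈ ℝ^d define J(ω) = (2π)^{−d/2} (∑_s g_s²)^{−1/2} ∑_{s∈J_n} g_s X_s exp(−i ω·s), so that I_n(ω) = |J(ω)|². Then for all ω, ω' ∈ ℝ^d, Cov( I_n(ω), I_n(ω') ) = | E[ J(ω) J(ω') ] |² + | E[ J(ω) conj(J(ω')) ] |²; in particular the covariance of the periodogram at any two frequencies is nonnegative. -/

import Mathlib

/-!
Write `J(ω) = A + iB` and `J(ω') = C + iD` with `A, B, C, D` real linear combinations of the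
`X_s`, so that `I_n(ω) = A² + B²` and `I_n(ω') = C² + D²`. Any two of these are jointly centered
Gaussian, and for such a pair `(U, V)` Isserlis' identity
`E[U²V²] = E[U²] E[V²] + 2 E[UV]²` follows by polarization from the fourth moment
`E[W⁴] = 3 E[W²]²` of the centered Gaussians `U`, `V`, `U + V`, `U - V`. Hence the covariance
is `2 (E[AC]² + E[AD]² + E[BC]² + E[BD]²)`, which regroups as
`(E[AC] - E[BD])² + (E[AD] + E[BC])² + (E[AC] + E[BD])² + (E[BC] - E[AD])²`,
that is `|E[J(ω) J(ω')]|² + |E[J(ω) conj J(ω')]|²`.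
-/

open MeasureTheory Real Filter Topology BigOperators NNReal

noncomputable section

namespace DSW

/-- The rectangular grid `J_n ⊆ ℤ^d`. -/
def grid {d : ℕ} (n : Fin d → ℕ+) : Finset (Fin d → ℤ) :=
  Fintype.piFinset fun i => Finset.Icc 0 ((n i : ℤ) - 1)

/-- `|n| = ∏ n_i` as a real number. -/
def gridSize {d : ℕ} (n : Fin d → ℕ+) : ℝ := ∏ i, ((n i : ℕ) : ℝ)

/-- A modulation on `J_n`: takes values in `[0,1]`, vanishes off the grid,
and is not identically zero. -/
def IsModulation {d : ℕ} (n : Fin d → ℕ+) (g : (Fin d → ℤ) → ℝ) : Prop :=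
  (∀ s, 0 ≤ g s ∧ g s ≤ 1) ∧ (∀ s, s ∉ grid n → g s = 0) ∧ ∃ s, g s ≠ 0

/-- `c_{g,n}(u) = (∑_{s∈ℤ^d} g_s g_{s+u}) / (∑_{s∈ℤ^d} g_s²)`. -/
def cg {d : ℕ} (g : (Fin d → ℤ) → ℝ) (u : Fin d → ℤ) : ℝ :=
  (∑' s : Fin d → ℤ, g s * g (s + u)) / ∑' s : Fin d → ℤ, g s ^ 2

/-- `ω · s` for `ω ∈ ℝ^d`, `s ∈ ℤ^d`. -/
def dotZ {d : ℕ} (ω : Fin d → ℝ) (s : Fin d → ℤ) : ℝ := ∑ i, ω i * (s i : ℝ)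

/-- The modulated periodogram `I_n(ω)`. -/
def periodogram {d : ℕ} (n : Fin d → ℕ+) (g X : (Fin d → ℤ) → ℝ) (ω : Fin d → ℝ) : ℝ :=
  ((2 * π) ^ d)⁻¹ * (∑' s : Fin d → ℤ, g s ^ 2)⁻¹ *
    ‖(∑ s ∈ grid n, ((g s * X s : ℝ) : ℂ) *
      Complex.exp (-(Complex.I * (dotZ ω s : ℂ))))‖ ^ 2

/-- The modified Fejér kernel `F_n(ω)`. -/
def fejer {d : ℕ} (n : Fin d → ℕ+) (g : (Fin d → ℤ) → ℝ) (ω : Fin d → ℝ) : ℝ :=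
  ((2 * π) ^ d)⁻¹ * (∑' s : Fin d → ℤ, g s ^ 2)⁻¹ *
    ‖(∑ s ∈ grid n, (g s : ℂ) * Complex.exp (Complex.I * (dotZ ω s : ℂ)))‖ ^ 2

/-- The torus `[0, 2π)^d`. -/
def torus (d : ℕ) : Set (Fin d → ℝ) := Set.univ.pi fun _ => Set.Ico 0 (2 * π)

/-- `2π`-periodicity in each coordinate. -/
def Periodic2Pi {d : ℕ} (f : (Fin d → ℝ) → ℝ) : Prop :=
  ∀ (ω : Fin d → ℝ) (u : Fin d → ℤ), f (fun i => ω i + 2 * π * (u i : ℝ)) = f ω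

/-- The expected periodogram `Ī_n(ω; f) = ∫_{[0,2π)^d} f(ω-λ) F_n(λ) dλ`. -/
def expPeriodogram {d : ℕ} (n : Fin d → ℕ+) (g : (Fin d → ℤ) → ℝ)
    (f : (Fin d → ℝ) → ℝ) (ω : Fin d → ℝ) : ℝ :=
  ∫ lam in torus d, f (ω - lam) * fejer n g lam

/-- The Fourier grid `Ω_n`. -/
def fourierGrid {d : ℕ} (n : Fin d → ℕ+) : Finset (Fin d → ℝ) :=
  (Fintype.piFinset fun i => Finset.range (n i : ℕ)).image
    fun k i => 2 * π * (k i : ℝ) / ((n i : ℕ) : ℝ)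

/-- A family of real random variables is jointly Gaussian and centered if every finite
real linear combination has a (possibly degenerate) centered Gaussian distribution. -/
def IsJointlyGaussianCentered {Ω : Type*} [MeasurableSpace Ω] (μ : Measure Ω)
    {S : Type*} (X : S → Ω → ℝ) : Prop :=
  ∀ (T : Finset S) (a : S → ℝ), ∃ v : ℝ≥0,
    Measure.map (fun x => ∑ s ∈ T, a s * X s x) μ = ProbabilityTheory.gaussianReal 0 v

end DSW

open scoped Nat

theorem integral_pow_two_mul_mul_exp_neg_mul_sq {b : ℝ} (hb : 0 < b) (k : ℕ) :
    ∫ x : ℝ, x ^ (2 * k) * exp (-b * x ^ 2) = b ^ (-(k + 1 / 2 : ℝ)) * Gamma (k + 1 / 2) := by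
  have hk : -1 < ((2 * k : ℕ) : ℝ) := by linarith [(Nat.cast_nonneg (2 * k) : (0 : ℝ) ≤ _)]
  calc ∫ x : ℝ, x ^ (2 * k) * exp (-b * x ^ 2)
      = ∫ x : ℝ, |x| ^ (2 * k) * exp (-b * |x| ^ 2) := by
        simp only [pow_mul, sq_abs]
    _ = 2 * ∫ x in Set.Ioi 0, x ^ ((2 * k : ℕ) : ℝ) * exp (-b * x ^ (2 : ℝ)) := by
        rw [integral_comp_abs (f := fun x => x ^ (2 * k) * exp (-b * x ^ 2))]
        norm_cast
    _ = b ^ (-(k + 1 / 2 : ℝ)) * Gamma (k + 1 / 2) := by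
        rw [integral_rpow_mul_exp_neg_mul_rpow two_pos hk hb]
        push_cast
        ring_nf

namespace ProbabilityTheory

theorem integral_pow_two_mul_gaussianReal (v : ℝ≥0) (k : ℕ) :
    ∫ x, x ^ (2 * k) ∂gaussianReal 0 v = v ^ k * (2 * k - 1 : ℕ)‼ := by
  rcases eq_or_ne v 0 with rfl | hv
  · cases k <;> simp
  have h2v : (0 : ℝ) < 2 * v := by positivity
  calc ∫ x, x ^ (2 * k) ∂gaussianReal 0 v
      = (√(2 * π * v))⁻¹ * ∫ x : ℝ, x ^ (2 * k) * exp (-(2 * v : ℝ)⁻¹ * x ^ 2) := by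
        rw [integral_gaussianReal_eq_integral_smul hv, ← integral_const_mul]
        congr 1 with x
        simp only [gaussianPDFReal, sub_zero, smul_eq_mul]
        ring_nf
    _ = v ^ k * (2 * k - 1 : ℕ)‼ := by
        rw [integral_pow_two_mul_mul_exp_neg_mul_sq (inv_pos.2 h2v), Gamma_nat_add_half,
          inv_rpow h2v.le, rpow_neg h2v.le, inv_inv, rpow_add h2v, Real.rpow_natCast,
          ← Real.sqrt_eq_rpow, show 2 * π * (v : ℝ) = 2 * v * π by ring, sqrt_mul h2v.le, mul_pow]
        have : 0 < √π := Real.sqrt_pos.2 Real.pi_pos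
        have : 0 < √(2 * v) := Real.sqrt_pos.2 h2v
        field_simp

theorem integrable_pow_gaussianReal (m : ℝ) (v : ℝ≥0) (k : ℕ) :
    Integrable (fun y : ℝ => y ^ k) (gaussianReal m v) := by
  rw [← integrable_norm_iff (by fun_prop)]
  simpa only [norm_pow, id] using (memLp_id_gaussianReal (μ := m) (v := v) k).integrable_norm_pow'

variable {Ω : Type*} [MeasurableSpace Ω] {μ : Measure Ω}

def IsCenteredGaussian (μ : Measure Ω) (W : Ω → ℝ) : Prop :=
  ∃ v : ℝ≥0, HasLaw W (gaussianReal 0 v) μ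

namespace IsCenteredGaussian

variable {W : Ω → ℝ}

theorem of_map_eq {v : ℝ≥0} (h : μ.map W = gaussianReal 0 v) : IsCenteredGaussian μ W :=
  ⟨v, AEMeasurable.of_map_ne_zero (h ▸ IsProbabilityMeasure.ne_zero _), h⟩

theorem integrable_pow (h : IsCenteredGaussian μ W) (k : ℕ) :
    Integrable (fun x => W x ^ k) μ := by
  obtain ⟨v, hW⟩ := h
  have := integrable_pow_gaussianReal 0 v k
  rw [← hW.map_eq, integrable_map_measure (by fun_prop) hW.aemeasurable] at this
  exact this

theorem integral_pow_four (h : IsCenteredGaussian μ W) :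
    ∫ x, W x ^ 4 ∂μ = 3 * (∫ x, W x ^ 2 ∂μ) ^ 2 := by
  obtain ⟨v, hW⟩ := h
  have hk (k : ℕ) : ∫ x, W x ^ (2 * k) ∂μ = v ^ k * (2 * k - 1 : ℕ)‼ :=
    (hW.integral_comp (f := fun y => y ^ (2 * k)) (by fun_prop)).trans
      (integral_pow_two_mul_gaussianReal v k)
  rw [hk 2, hk 1]
  norm_num [Nat.doubleFactorial]
  ring

end IsCenteredGaussian

def IsCenteredGaussianPair (μ : Measure Ω) (U V : Ω → ℝ) : Prop :=
  ∀ α β : ℝ, IsCenteredGaussian μ (fun x => α * U x + β * V x)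

namespace IsCenteredGaussianPair

variable {U V : Ω → ℝ}

theorem left (h : IsCenteredGaussianPair μ U V) : IsCenteredGaussian μ U := by
  simpa using h 1 0

theorem right (h : IsCenteredGaussianPair μ U V) : IsCenteredGaussian μ V := by
  simpa using h 0 1

theorem add (h : IsCenteredGaussianPair μ U V) : IsCenteredGaussian μ (fun x => U x + V x) := by
  simpa using h 1 1

theorem sub (h : IsCenteredGaussianPair μ U V) : IsCenteredGaussian μ (fun x => U x - V x) := by
  simpa [sub_eq_add_neg] using h 1 (-1)

theorem integrable_mul (h : IsCenteredGaussianPair μ U V) : Integrable (fun x => U x * V x) μ := by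
  refine (((h.add.integrable_pow 2).sub (h.left.integrable_pow 2)).sub
    (h.right.integrable_pow 2)).div_const 2 |>.congr (.of_forall fun x => ?_)
  simp only [Pi.sub_apply]
  ring

theorem integrable_sq_mul_sq (h : IsCenteredGaussianPair μ U V) :
    Integrable (fun x => U x ^ 2 * V x ^ 2) μ := by
  refine ((((h.add.integrable_pow 4).add (h.sub.integrable_pow 4)).sub
    ((h.left.integrable_pow 4).const_mul 2)).sub
      ((h.right.integrable_pow 4).const_mul 2)).div_const 12 |>.congr (.of_forall fun x => ?_)
  simp only [Pi.sub_apply, Pi.add_apply]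
  ring

theorem integral_sq_mul_sq (h : IsCenteredGaussianPair μ U V) :
    ∫ x, U x ^ 2 * V x ^ 2 ∂μ =
      (∫ x, U x ^ 2 ∂μ) * (∫ x, V x ^ 2 ∂μ) + 2 * (∫ x, U x * V x ∂μ) ^ 2 := by
  have hU2 : Integrable (fun x => U x ^ 2) μ := h.left.integrable_pow 2
  have hV2 : Integrable (fun x => V x ^ 2) μ := h.right.integrable_pow 2
  have hS2 : Integrable (fun x => (U x + V x) ^ 2) μ := h.add.integrable_pow 2
  have hU4 : Integrable (fun x => U x ^ 4) μ := h.left.integrable_pow 4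
  have hV4 : Integrable (fun x => V x ^ 4) μ := h.right.integrable_pow 4
  have hS4 : Integrable (fun x => (U x + V x) ^ 4) μ := h.add.integrable_pow 4
  have hD4 : Integrable (fun x => (U x - V x) ^ 4) μ := h.sub.integrable_pow 4
  have h4 : ∫ x, U x ^ 2 * V x ^ 2 ∂μ = (∫ x, (U x + V x) ^ 4 ∂μ + ∫ x, (U x - V x) ^ 4 ∂μ
      - 2 * ∫ x, U x ^ 4 ∂μ - 2 * ∫ x, V x ^ 4 ∂μ) / 12 := by
    rw [← integral_add hS4 hD4, ← integral_const_mul, ← integral_const_mul, ← integral_sub,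
      ← integral_sub, ← integral_div]
    · congr 1 with x
      ring
    all_goals fun_prop
  have h2 : ∫ x, U x * V x ∂μ =
      (∫ x, (U x + V x) ^ 2 ∂μ - ∫ x, U x ^ 2 ∂μ - ∫ x, V x ^ 2 ∂μ) / 2 := by
    rw [← integral_sub hS2 hU2, ← integral_sub (by fun_prop) hV2, ← integral_div]
    congr 1 with x
    ring
  have hpar : ∫ x, (U x - V x) ^ 2 ∂μ =
      2 * ∫ x, U x ^ 2 ∂μ + 2 * ∫ x, V x ^ 2 ∂μ - ∫ x, (U x + V x) ^ 2 ∂μ := by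
    rw [← integral_const_mul, ← integral_const_mul, ← integral_add (by fun_prop) (by fun_prop),
      ← integral_sub (by fun_prop) hS2]
    congr 1 with x
    ring
  rw [h4, h2, h.add.integral_pow_four, h.sub.integral_pow_four, h.left.integral_pow_four,
    h.right.integral_pow_four, hpar]
  ring

end IsCenteredGaussianPair

theorem sq_norm_integral_mul {Z W : Ω → ℂ}
    (hRR : Integrable (fun x => (Z x).re * (W x).re) μ)
    (hRI : Integrable (fun x => (Z x).re * (W x).im) μ)
    (hIR : Integrable (fun x => (Z x).im * (W x).re) μ)
    (hII : Integrable (fun x => (Z x).im * (W x).im) μ) :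
    ‖∫ x, Z x * W x ∂μ‖ ^ 2 =
      (∫ x, (Z x).re * (W x).re ∂μ - ∫ x, (Z x).im * (W x).im ∂μ) ^ 2 +
        (∫ x, (Z x).re * (W x).im ∂μ + ∫ x, (Z x).im * (W x).re ∂μ) ^ 2 := by
  have hZW : Integrable (fun x => Z x * W x) μ :=
    Integrable.re_im_iff.1
      ⟨by simp only [RCLike.re_to_complex, Complex.mul_re]; exact hRR.sub hII,
        by simp only [RCLike.im_to_complex, Complex.mul_im]; exact hRI.add hIR⟩
  rw [Complex.sq_norm, Complex.normSq_apply, ← sq, ← sq]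
  have hre := integral_re hZW
  have him := integral_im hZW
  simp only [RCLike.re_to_complex, RCLike.im_to_complex, Complex.mul_re, Complex.mul_im] at hre him
  rw [← hre, ← him, integral_sub hRR hII, integral_add hRI hIR]

theorem integral_sq_norm {Z : Ω → ℂ} (hre : Integrable (fun x => (Z x).re ^ 2) μ)
    (him : Integrable (fun x => (Z x).im ^ 2) μ) :
    ∫ x, ‖Z x‖ ^ 2 ∂μ = ∫ x, (Z x).re ^ 2 ∂μ + ∫ x, (Z x).im ^ 2 ∂μ := by
  simp only [Complex.sq_norm, Complex.normSq_apply, ← sq]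
  exact integral_add hre him

open ComplexConjugate in
theorem integral_sq_norm_mul_sq_norm_sub {Z W : Ω → ℂ}
    (h : ∀ L L' : ℂ →ₗ[ℝ] ℝ, IsCenteredGaussianPair μ (fun x => L (Z x)) (fun x => L' (W x))) :
    ∫ x, ‖Z x‖ ^ 2 * ‖W x‖ ^ 2 ∂μ - (∫ x, ‖Z x‖ ^ 2 ∂μ) * (∫ x, ‖W x‖ ^ 2 ∂μ) =
      ‖∫ x, Z x * W x ∂μ‖ ^ 2 + ‖∫ x, Z x * conj (W x) ∂μ‖ ^ 2 := by
  have hRR : IsCenteredGaussianPair μ (fun x => (Z x).re) (fun x => (W x).re) :=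
    h Complex.reLm Complex.reLm
  have hRI : IsCenteredGaussianPair μ (fun x => (Z x).re) (fun x => (W x).im) :=
    h Complex.reLm Complex.imLm
  have hIR : IsCenteredGaussianPair μ (fun x => (Z x).im) (fun x => (W x).re) :=
    h Complex.imLm Complex.reLm
  have hII : IsCenteredGaussianPair μ (fun x => (Z x).im) (fun x => (W x).im) :=
    h Complex.imLm Complex.imLm
  have hprod : ∫ x, ‖Z x‖ ^ 2 * ‖W x‖ ^ 2 ∂μ =
      ∫ x, (Z x).re ^ 2 * (W x).re ^ 2 ∂μ + ∫ x, (Z x).re ^ 2 * (W x).im ^ 2 ∂μ +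
        ∫ x, (Z x).im ^ 2 * (W x).re ^ 2 ∂μ + ∫ x, (Z x).im ^ 2 * (W x).im ^ 2 ∂μ := by
    have := hRR.integrable_sq_mul_sq
    have := hRI.integrable_sq_mul_sq
    have := hIR.integrable_sq_mul_sq
    have := hII.integrable_sq_mul_sq
    rw [← integral_add (by fun_prop) (by fun_prop), ← integral_add (by fun_prop) (by fun_prop),
      ← integral_add (by fun_prop) (by fun_prop)]
    congr 1 with x
    simp only [Complex.sq_norm, Complex.normSq_apply]
    ring
  have hconj := sq_norm_integral_mul (Z := Z) (W := fun x => conj (W x)) (μ := μ)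
    (by simpa using hRR.integrable_mul) (by simpa using hRI.integrable_mul.neg)
    (by simpa using hIR.integrable_mul) (by simpa using hII.integrable_mul.neg)
  simp only [Complex.conj_re, Complex.conj_im, mul_neg, integral_neg] at hconj
  rw [hprod, integral_sq_norm (hRR.left.integrable_pow 2) (hIR.left.integrable_pow 2),
    integral_sq_norm (hRR.right.integrable_pow 2) (hRI.right.integrable_pow 2), hconj,
    sq_norm_integral_mul hRR.integrable_mul hRI.integrable_mul hIR.integrable_mul
      hII.integrable_mul, hRR.integral_sq_mul_sq, hRI.integral_sq_mul_sq, hIR.integral_sq_mul_sq,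
    hII.integral_sq_mul_sq]
  ring

end ProbabilityTheory

namespace DSW

open ProbabilityTheory

theorem IsJointlyGaussianCentered.isCenteredGaussianPair {Ω S : Type*} [MeasurableSpace Ω]
    {μ : Measure Ω} {Y : S → Ω → ℝ}
    (hY : IsJointlyGaussianCentered μ Y) (T : Finset S) (c c' : S → ℂ) (L L' : ℂ →ₗ[ℝ] ℝ) :
    IsCenteredGaussianPair μ (fun x => L (∑ s ∈ T, c s * Y s x))
      (fun x => L' (∑ s ∈ T, c' s * Y s x)) := by
  intro α β
  obtain ⟨v, hv⟩ := hY T fun s => α * L (c s) + β * L' (c' s)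
  refine .of_map_eq (v := v) ?_
  rw [← hv]
  congr 1 with x
  have hL (L : ℂ →ₗ[ℝ] ℝ) (z : ℂ) (y : ℝ) : L (z * y) = y * L z := by
    rw [mul_comm, ← Complex.real_smul, L.map_smul, smul_eq_mul]
  simp only [map_sum, hL, Finset.mul_sum, ← Finset.sum_add_distrib]
  exact Finset.sum_congr rfl fun s _ => by ring

theorem periodogram_eq_sq_norm {d : ℕ} (n : Fin d → ℕ+) (g Y : (Fin d → ℤ) → ℝ)
    (ω : Fin d → ℝ) :
    periodogram n g Y ω =
      ‖(((√((2 * π) ^ d))⁻¹ * (√(∑' s : Fin d → ℤ, g s ^ 2))⁻¹ : ℝ) : ℂ) *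
        ∑ s ∈ grid n, ((g s * Y s : ℝ) : ℂ) * Complex.exp (-(Complex.I * (dotZ ω s : ℂ)))‖ ^ 2 := by
  have hg : 0 ≤ ∑' s : Fin d → ℤ, g s ^ 2 := tsum_nonneg fun s => sq_nonneg _
  rw [norm_mul, Complex.norm_real, mul_pow, Real.norm_eq_abs, sq_abs, mul_pow, inv_pow, inv_pow,
    sq_sqrt (by positivity), sq_sqrt hg]
  rfl

theorem periodogram_covariance_isserlis_general
    {d : ℕ} (n : Fin d → ℕ+) (g : (Fin d → ℤ) → ℝ)
    {Ω : Type*} [MeasurableSpace Ω] (μ : Measure Ω)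
    (X : (Fin d → ℤ) → Ω → ℝ)
    (hX : IsJointlyGaussianCentered μ X)
    (J : (Fin d → ℝ) → Ω → ℂ)
    (hJ : ∀ ω x, J ω x =
      (((Real.sqrt ((2 * π) ^ d))⁻¹ * (Real.sqrt (∑' s : Fin d → ℤ, g s ^ 2))⁻¹ : ℝ) : ℂ) *
        ∑ s ∈ grid n, ((g s * X s x : ℝ) : ℂ) * Complex.exp (-(Complex.I * (dotZ ω s : ℂ)))) :
    ∀ ω ω' : Fin d → ℝ,
      ((∫ x, periodogram n g (fun s => X s x) ω * periodogram n g (fun s => X s x) ω' ∂μ) -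
          (∫ x, periodogram n g (fun s => X s x) ω ∂μ) *
            (∫ x, periodogram n g (fun s => X s x) ω' ∂μ) =
        ‖(∫ x, J ω x * J ω' x ∂μ)‖ ^ 2 +
          ‖(∫ x, J ω x * (starRingEnd ℂ) (J ω' x) ∂μ)‖ ^ 2) ∧
      0 ≤ (∫ x, periodogram n g (fun s => X s x) ω * periodogram n g (fun s => X s x) ω' ∂μ) -
          (∫ x, periodogram n g (fun s => X s x) ω ∂μ) *
            (∫ x, periodogram n g (fun s => X s x) ω' ∂μ) := by
  intro ω ω'
  set κ : ℝ := (√((2 * π) ^ d))⁻¹ * (√(∑' s : Fin d → ℤ, g s ^ 2))⁻¹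
  have hI (w : Fin d → ℝ) (x : Ω) : periodogram n g (fun s => X s x) w = ‖J w x‖ ^ 2 := by
    rw [periodogram_eq_sq_norm, hJ]
  have hJsum (w : Fin d → ℝ) (x : Ω) : J w x = ∑ s ∈ grid n,
      (κ : ℂ) * g s * Complex.exp (-(Complex.I * (dotZ w s : ℂ))) * X s x := by
    rw [hJ, Finset.mul_sum]
    exact Finset.sum_congr rfl fun s _ => by push_cast; ring
  have hG (L L' : ℂ →ₗ[ℝ] ℝ) :
      IsCenteredGaussianPair μ (fun x => L (J ω x)) (fun x => L' (J ω' x)) := by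
    simp only [hJsum]
    exact hX.isCenteredGaussianPair _ _ _ L L'
  have hcov := integral_sq_norm_mul_sq_norm_sub hG
  simp only [hI]
  exact ⟨hcov, by rw [hcov]; positivity⟩

/-- Isserlis formula for the covariance of the periodogram at two
frequencies; in particular this covariance is nonnegative. -/
theorem periodogram_covariance_isserlis
    {d : ℕ} (n : Fin d → ℕ+) (g : (Fin d → ℤ) → ℝ) (hg : IsModulation n g)
    {Ω : Type*} [MeasurableSpace Ω] (μ : Measure Ω) [IsProbabilityMeasure μ]
    (X : (Fin d → ℤ) → Ω → ℝ)
    (hX : IsJointlyGaussianCentered μ X)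
    (hX2 : ∀ s, MemLp (X s) 2 μ)
    (J : (Fin d → ℝ) → Ω → ℂ)
    (hJ : ∀ ω x, J ω x =
      (((Real.sqrt ((2 * π) ^ d))⁻¹ * (Real.sqrt (∑' s : Fin d → ℤ, g s ^ 2))⁻¹ : ℝ) : ℂ) *
        ∑ s ∈ grid n, ((g s * X s x : ℝ) : ℂ) * Complex.exp (-(Complex.I * (dotZ ω s : ℂ)))) :
    ∀ ω ω' : Fin d → ℝ,
      ((∫ x, periodogram n g (fun s => X s x) ω * periodogram n g (fun s => X s x) ω' ∂μ) -
          (∫ x, periodogram n g (fun s => X s x) ω ∂μ) *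
            (∫ x, periodogram n g (fun s => X s x) ω' ∂μ) =
        ‖(∫ x, J ω x * J ω' x ∂μ)‖ ^ 2 +
          ‖(∫ x, J ω x * (starRingEnd ℂ) (J ω' x) ∂μ)‖ ^ 2) ∧
      0 ≤ (∫ x, periodogram n g (fun s => X s x) ω * periodogram n g (fun s => X s x) ω' ∂μ) -
          (∫ x, periodogram n g (fun s => X s x) ω ∂μ) *
            (∫ x, periodogram n g (fun s => X s x) ω' ∂μ) :=
  periodogram_covariance_isserlis_general n g μ X hX J hJ

end DSW
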